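/- Let p_0, p_1, … be pairwise distinct propositional atoms and, for each i ∈ ℕ, let T_i = Cn({¬p_i} ∪ {p_j : j > i}). Then { T_i : i ∈ ℕ } is a countable family of pairwise inconsistent theories (the union of any two distinct members is inconsistent), and it is not representable by any default theory; in particular, it is not representable by any normal default theory. -/

import Mathlib

/-- Propositional formulas over a set of atoms `α`. -/
inductive PropForm (α : Type) : Type
  | atom : α → PropForm α
  | fls  : PropForm α
  | impl : PropForm α → PropForm α → PropForm α

namespace PropForm

/-- Negation `¬φ`, definable as `φ → ⊥`. -/
def neg {α : Type} (φ : PropForm α) : PropForm α := impl φ fls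

/-- Conjunction, definable from implication and falsum. -/
def conj {α : Type} (φ ψ : PropForm α) : PropForm α := (φ.impl ψ.neg).neg

/-- Biimplication `φ ↔ ψ`. -/
def biimp {α : Type} (φ ψ : PropForm α) : PropForm α := conj (φ.impl ψ) (ψ.impl φ)

/-- Evaluation of a formula under a valuation of the atoms. -/
def eval {α : Type} (v : α → Prop) : PropForm α → Prop
  | atom a   => v a
  | fls      => False
  | impl φ ψ => eval v φ → eval v ψ

/-- Renaming/embedding of atoms. -/
def map {α β : Type} (f : α → β) : PropForm α → PropForm β
  | atom a   => atom (f a)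
  | fls      => fls
  | impl φ ψ => impl (map f φ) (map f ψ)

end PropForm

/-- Classical propositional consequence operator. -/
def Cn {α : Type} (S : Set (PropForm α)) : Set (PropForm α) :=
  {φ | ∀ v : α → Prop, (∀ ψ ∈ S, ψ.eval v) → φ.eval v}

/-- A theory: a set of formulas closed under propositional consequence. -/
def IsTheory {α : Type} (S : Set (PropForm α)) : Prop := Cn S ⊆ S

/-- A set of formulas is consistent if its consequences are not the whole language. -/
def Consistent {α : Type} (S : Set (PropForm α)) : Prop := Cn S ≠ Set.univ

/-- A default `α : Γ / β` with prerequisite, finite set of justifications, consequent. -/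
structure Default (α : Type) where
  pre : PropForm α
  jus : Finset (PropForm α)
  con : PropForm α

/-- A default is applicable w.r.t. `S` if no justification's negation follows from `S`. -/
def Default.Applicable {α : Type} (S : Set (PropForm α)) (d : Default α) : Prop :=
  ∀ γ ∈ d.jus, γ.neg ∉ Cn S

/-- The reduct of `D` w.r.t. `S`: the monotone rules `pre/con` of `S`-applicable defaults. -/
def Reduct {α : Type} (D : Set (Default α)) (S : Set (PropForm α)) :
    Set (PropForm α × PropForm α) :=
  {r | ∃ d ∈ D, d.Applicable S ∧ r = (d.pre, d.con)}

/-- `Cn^B(W)`: consequences of `W` in propositional calculus augmented with rules `B`;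
the least set containing `W`, closed under `Cn`, and closed under the rules of `B`. -/
def CnRules {α : Type} (B : Set (PropForm α × PropForm α)) (W : Set (PropForm α)) :
    Set (PropForm α) :=
  ⋂₀ {S | W ⊆ S ∧ Cn S ⊆ S ∧ ∀ r ∈ B, r.1 ∈ S → r.2 ∈ S}

/-- `S` is an extension of the default theory `(D, W)`. -/
def IsExtension {α : Type} (D : Set (Default α)) (W S : Set (PropForm α)) : Prop :=
  S = CnRules (Reduct D S) W

/-- The family of all extensions of `(D, W)`. -/
def ext {α : Type} (D : Set (Default α)) (W : Set (PropForm α)) : Set (Set (PropForm α)) :=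
  {S | IsExtension D W S}

/-- A default is prerequisite-free if its prerequisite is a tautology. -/
def Default.PrereqFree {α : Type} (d : Default α) : Prop :=
  d.pre ∈ Cn (∅ : Set (PropForm α))

/-- A default is normal if it has the form `α : {β} / β`. -/
def Default.Normal {α : Type} (d : Default α) : Prop := d.jus = {d.con}

/-!
A formula of `T i` that mentions no atom `p k` with `k ≥ i` is a tautology: its atoms can be
reset freely to the model of `T i` (`p i` false, all later atoms true). Hence a formula outside
`T 0` stays outside `T i` for all large `i`, and a default applicable with respect to `T 0` is
eventually applicable with respect to `T i`. If the `T i` were the extensions of `(D, W)`, then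
`¬p 0 ∈ T 0 = Cn^{D_{T 0}}(W)` would be derived with finitely many rules of `D_{T 0}`, all of
which lie in `D_{T i}` for large `i`; so `¬p 0 ∈ T i`, which fails for `i ≠ 0`.
-/

variable {α : Type}

section Consequence

lemma subset_Cn (S : Set (PropForm α)) : S ⊆ Cn S :=
  fun _ hφ _ hv => hv _ hφ

lemma Cn_mono {S S' : Set (PropForm α)} (h : S ⊆ S') : Cn S ⊆ Cn S' :=
  fun _ hφ v hv => hφ v fun ψ hψ => hv ψ (h hψ)

lemma Cn_subset_of_subset_Cn {S X : Set (PropForm α)} (h : S ⊆ Cn X) : Cn S ⊆ Cn X :=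
  fun _ hφ v hv => hφ v fun _ hψ => h hψ v hv

lemma Cn_Cn (S : Set (PropForm α)) : Cn (Cn S) = Cn S :=
  (Cn_subset_of_subset_Cn subset_rfl).antisymm (Cn_mono (subset_Cn S))

lemma isTheory_Cn (S : Set (PropForm α)) : IsTheory (Cn S) :=
  (Cn_Cn S).subset

lemma not_consistent_of_mem_of_neg_mem {S : Set (PropForm α)} {φ : PropForm α}
    (h : φ ∈ S) (hn : φ.neg ∈ S) : ¬ Consistent S := fun hS =>
  hS <| Set.eq_univ_of_forall fun _ _ hv => (hv _ hn (hv _ h)).elim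

end Consequence

namespace PropForm

def atoms : PropForm α → Set α
  | atom a => {a}
  | fls => ∅
  | impl φ ψ => φ.atoms ∪ ψ.atoms

lemma finite_atoms (φ : PropForm α) : φ.atoms.Finite := by
  induction φ with
  | atom a => exact Set.finite_singleton a
  | fls => exact Set.finite_empty
  | impl φ ψ hφ hψ => exact hφ.union hψ

lemma eval_congr_of_atoms {v w : α → Prop} {φ : PropForm α} (h : ∀ a ∈ φ.atoms, v a ↔ w a) :
    φ.eval v ↔ φ.eval w := by
  induction φ with
  | atom a => exact h a rfl
  | fls => exact Iff.rfl
  | impl φ ψ hφ hψ =>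
    exact imp_congr (hφ fun a ha => h a (Or.inl ha)) (hψ fun a ha => h a (Or.inr ha))

def models (φ : PropForm α) : Set (α → Bool) :=
  {v | φ.eval (v · = true)}

lemma isClopen_models (φ : PropForm α) : IsClopen φ.models := by
  induction φ with
  | atom a => exact (isClopen_discrete {true}).preimage (continuous_apply a)
  | fls => exact isClopen_empty
  | impl φ ψ hφ hψ =>
    have hmodels : (φ.impl ψ).models = φ.modelsᶜ ∪ ψ.models := by
      ext v
      exact imp_iff_not_or
    exact hmodels ▸ hφ.compl.union hψ

end PropForm

open PropForm in
/-- Compactness of propositional logic, from compactness of the Cantor space `α → Bool`. -/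
lemma exists_finite_of_mem_Cn {S : Set (PropForm α)} {φ : PropForm α} (h : φ ∈ Cn S) :
    ∃ t ⊆ S, t.Finite ∧ φ ∈ Cn t := by
  classical
  have hempty : φ.modelsᶜ ∩ ⋂ ψ : S, models ψ.1 = ∅ :=
    Set.eq_empty_of_forall_notMem fun w ⟨hw, hS⟩ =>
      hw (h _ fun ψ hψ => Set.mem_iInter.1 hS ⟨ψ, hψ⟩)
  obtain ⟨u, hu⟩ := (isClopen_models φ).compl.isClosed.isCompact.elim_finite_subfamily_closed
    (fun ψ : S => models ψ.1) (fun ψ => (isClopen_models ψ.1).isClosed) hempty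
  refine ⟨Subtype.val '' (u : Set S), fun _ ⟨ψ, _, hψ⟩ => hψ ▸ ψ.2, u.finite_toSet.image _,
    fun v hv => by_contra fun hφ => ?_⟩
  have hvw : ∀ χ : PropForm α, χ.eval v ↔ (fun a => decide (v a)) ∈ χ.models :=
    fun χ => eval_congr_of_atoms fun a _ => decide_eq_true_iff.symm
  refine (Set.eq_empty_iff_forall_notMem.1 hu) (fun a => decide (v a))
    ⟨fun h' => hφ ((hvw φ).2 h'), Set.mem_iInter₂.2 fun ψ hψ => ?_⟩
  exact (hvw ψ.1).1 (hv _ ⟨ψ, hψ, rfl⟩)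

section RuleConsequence

variable {B B' : Set (PropForm α × PropForm α)} {W : Set (PropForm α)}

lemma subset_CnRules : W ⊆ CnRules B W :=
  fun _ hφ => Set.mem_sInter.2 fun _ hS => hS.1 hφ

lemma Cn_CnRules_subset : Cn (CnRules B W) ⊆ CnRules B W :=
  fun _ hφ => Set.mem_sInter.2 fun _ hS => hS.2.1 (Cn_mono (Set.sInter_subset_of_mem hS) hφ)

lemma CnRules_rule {r : PropForm α × PropForm α} (hr : r ∈ B) (h : r.1 ∈ CnRules B W) :
    r.2 ∈ CnRules B W :=
  Set.mem_sInter.2 fun S hS => hS.2.2 r hr (Set.mem_sInter.1 h S hS)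

lemma CnRules_subset {S : Set (PropForm α)} (hW : W ⊆ S) (hCn : Cn S ⊆ S)
    (hB : ∀ r ∈ B, r.1 ∈ S → r.2 ∈ S) : CnRules B W ⊆ S :=
  Set.sInter_subset_of_mem ⟨hW, hCn, hB⟩

lemma CnRules_mono (h : B ⊆ B') : CnRules B W ⊆ CnRules B' W :=
  Set.sInter_subset_sInter fun _ hS => ⟨hS.1, hS.2.1, fun r hr => hS.2.2 r (h hr)⟩

lemma exists_finite_subset_CnRules {t : Set (PropForm α)} (ht : t.Finite)
    (h : ∀ ψ ∈ t, ∃ B₀ ⊆ B, B₀.Finite ∧ ψ ∈ CnRules B₀ W) :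
    ∃ B₀ ⊆ B, B₀.Finite ∧ t ⊆ CnRules B₀ W := by
  choose C hCB hCfin hC using h
  refine ⟨⋃ (ψ) (hψ : ψ ∈ t), C ψ hψ, Set.iUnion₂_subset hCB, ht.biUnion' hCfin, ?_⟩
  exact fun ψ hψ => CnRules_mono (Set.subset_iUnion₂ (s := C) ψ hψ) (hC ψ hψ)

lemma exists_finite_of_mem_CnRules {φ : PropForm α} (h : φ ∈ CnRules B W) :
    ∃ B₀ ⊆ B, B₀.Finite ∧ φ ∈ CnRules B₀ W := by
  refine CnRules_subset (S := {φ | ∃ B₀ ⊆ B, B₀.Finite ∧ φ ∈ CnRules B₀ W}) ?_ ?_ ?_ h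
  · exact fun φ hφ => ⟨∅, Set.empty_subset B, Set.finite_empty, subset_CnRules hφ⟩
  · intro φ hφ
    obtain ⟨t, htS, htfin, hφt⟩ := exists_finite_of_mem_Cn hφ
    obtain ⟨B₀, hB₀, hfin, htB₀⟩ := exists_finite_subset_CnRules htfin fun ψ hψ => htS hψ
    exact ⟨B₀, hB₀, hfin, Cn_CnRules_subset (Cn_mono htB₀ hφt)⟩
  · rintro r hr ⟨B₀, hB₀, hfin, hr₁⟩
    exact ⟨insert r B₀, Set.insert_subset hr hB₀, hfin.insert r,
      CnRules_rule (Set.mem_insert r B₀) (CnRules_mono (Set.subset_insert r B₀) hr₁)⟩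

end RuleConsequence

section Persistence

open Filter

variable {ι : Type} {l : Filter ι} {S : ι → Set (PropForm α)} {j : ι}

lemma Default.eventually_applicable
    (hS : ∀ γ, γ ∉ Cn (S j) → ∀ᶠ i in l, γ ∉ Cn (S i))
    {d : Default α} (hd : d.Applicable (S j)) : ∀ᶠ i in l, d.Applicable (S i) :=
  (eventually_all_finset d.jus).2 fun γ hγ => hS _ (hd γ hγ)

lemma eventually_subset_reduct (hS : ∀ γ, γ ∉ Cn (S j) → ∀ᶠ i in l, γ ∉ Cn (S i))
    {D : Set (Default α)} {B₀ : Set (PropForm α × PropForm α)} (hfin : B₀.Finite)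
    (hB₀ : B₀ ⊆ Reduct D (S j)) : ∀ᶠ i in l, B₀ ⊆ Reduct D (S i) := by
  refine hfin.eventually_all.2 fun r hr => ?_
  obtain ⟨d, hdD, hd, rfl⟩ := hB₀ hr
  exact (Default.eventually_applicable hS hd).mono fun i hdi => ⟨d, hdD, hdi, rfl⟩

lemma eventually_mem_CnRules_reduct (hS : ∀ γ, γ ∉ Cn (S j) → ∀ᶠ i in l, γ ∉ Cn (S i))
    {D : Set (Default α)} {W : Set (PropForm α)} {φ : PropForm α}
    (hφ : φ ∈ CnRules (Reduct D (S j)) W) : ∀ᶠ i in l, φ ∈ CnRules (Reduct D (S i)) W := by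
  obtain ⟨B₀, hB₀, hfin, hφB₀⟩ := exists_finite_of_mem_CnRules hφ
  exact (eventually_subset_reduct hS hfin hB₀).mono fun i hi => CnRules_mono hi hφB₀

end Persistence

section TailTheory

open PropForm Filter

variable {p : ℕ → α}

def tailTheory (p : ℕ → α) (i : ℕ) : Set (PropForm α) :=
  Cn ({(atom (p i)).neg} ∪ {φ | ∃ j > i, φ = atom (p j)})

lemma Cn_tailTheory (i : ℕ) : Cn (tailTheory p i) = tailTheory p i :=
  Cn_Cn _

lemma neg_atom_mem_tailTheory (i : ℕ) : (atom (p i)).neg ∈ tailTheory p i :=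
  subset_Cn _ (Or.inl rfl)

lemma atom_mem_tailTheory {i j : ℕ} (hij : i < j) : atom (p j) ∈ tailTheory p i :=
  subset_Cn _ (Or.inr ⟨j, hij, rfl⟩)

lemma neg_atom_notMem_tailTheory (hp : p.Injective) {i j : ℕ} (hij : j ≠ i) :
    (atom (p j)).neg ∉ tailTheory p i := fun h =>
  h (· ≠ p i) (by
    rintro ψ (rfl | ⟨k, hk, rfl⟩)
    · exact fun h => h rfl
    · exact fun h => hk.ne' (hp h)) (fun h => hij (hp h))

lemma not_consistent_tailTheory_union {i j : ℕ} (hij : i ≠ j) :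
    ¬ Consistent (tailTheory p i ∪ tailTheory p j) := by
  rcases hij.lt_or_gt with hlt | hgt
  · exact not_consistent_of_mem_of_neg_mem (Or.inl (atom_mem_tailTheory hlt))
      (Or.inr (neg_atom_mem_tailTheory j))
  · exact not_consistent_of_mem_of_neg_mem (Or.inr (atom_mem_tailTheory hgt))
      (Or.inl (neg_atom_mem_tailTheory i))

open Classical in
lemma eval_of_mem_tailTheory (hp : p.Injective) {i : ℕ} {φ : PropForm α}
    (hφ : φ ∈ tailTheory p i) (hatoms : ∀ k ≥ i, p k ∉ φ.atoms) (v : α → Prop) : φ.eval v := by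
  let v' : α → Prop := fun a => if a ∈ p '' Set.Ici i then a ≠ p i else v a
  have hv' : φ.eval v' := hφ v' <| by
    rintro ψ (rfl | ⟨k, hk, rfl⟩)
    · show v' (p i) → False
      simp only [v', if_pos (Set.mem_image_of_mem p (Set.mem_Ici.2 le_rfl))]
      exact fun h => h rfl
    · show v' (p k)
      simp only [v', if_pos (Set.mem_image_of_mem p (Set.mem_Ici.2 hk.le))]
      exact fun h => hk.ne' (hp h)
  refine (eval_congr_of_atoms fun a ha => ?_).1 hv'
  have ha' : a ∉ p '' Set.Ici i := by
    rintro ⟨k, hk, rfl⟩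
    exact hatoms k hk ha
  simp only [v', if_neg ha']

lemma eventually_notMem_tailTheory (hp : p.Injective) {γ : PropForm α} {j : ℕ}
    (hγ : γ ∉ tailTheory p j) : ∀ᶠ i in atTop, γ ∉ tailTheory p i := by
  obtain ⟨N, hN⟩ := ((finite_atoms γ).preimage hp.injOn).bddAbove
  refine eventually_atTop.2 ⟨N + 1, fun i hi hγi => hγ fun v _ => ?_⟩
  exact eval_of_mem_tailTheory hp hγi (fun k hk hmem => by have := hN hmem; omega) v

theorem not_exists_ext_eq_range_tailTheory (hp : p.Injective) :
    ¬ ∃ (D : Set (Default α)) (W : Set (PropForm α)), ext D W = Set.range (tailTheory p) := by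
  rintro ⟨D, W, hext⟩
  have hfix : ∀ i, tailTheory p i = CnRules (Reduct D (tailTheory p i)) W := fun i =>
    show tailTheory p i ∈ ext D W from hext ▸ Set.mem_range_self i
  have hS : ∀ γ, γ ∉ Cn (tailTheory p 0) → ∀ᶠ i in atTop, γ ∉ Cn (tailTheory p i) := by
    simpa only [Cn_tailTheory] using fun γ => eventually_notMem_tailTheory hp (j := 0)
  have h₀ := hfix 0 ▸ neg_atom_mem_tailTheory (p := p) 0
  obtain ⟨i, hi, hne⟩ :=
    ((eventually_mem_CnRules_reduct hS h₀).and (eventually_ne_atTop 0)).exists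
  exact neg_atom_notMem_tailTheory hp hne.symm (hfix i ▸ hi)

end TailTheory

theorem pairwise_inconsistent_family_not_representable_general {α : Type}
    (p : ℕ → α) (hp : Function.Injective p)
    (𝒯 : Set (Set (PropForm α)))
    (h𝒯 : 𝒯 = {T | ∃ i : ℕ,
      T = Cn ({(PropForm.atom (p i)).neg} ∪ {φ | ∃ j > i, φ = PropForm.atom (p j)})}) :
    𝒯.Countable ∧
    (∀ T ∈ 𝒯, IsTheory T) ∧
    (∀ T ∈ 𝒯, ∀ T' ∈ 𝒯, T ≠ T' → ¬ Consistent (T ∪ T')) ∧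
    (¬ ∃ (D : Set (Default α)) (W : Set (PropForm α)), ext D W = 𝒯) ∧
    (¬ ∃ (D : Set (Default α)) (W : Set (PropForm α)),
        (∀ d ∈ D, d.Normal) ∧ ext D W = 𝒯) := by
  have h𝒯 : 𝒯 = Set.range (tailTheory p) := by
    rw [h𝒯]
    ext T
    exact exists_congr fun i => eq_comm
  subst h𝒯
  refine ⟨Set.countable_range _, ?_, ?_, not_exists_ext_eq_range_tailTheory hp, ?_⟩
  · rintro _ ⟨i, rfl⟩
    exact isTheory_Cn _
  · rintro _ ⟨i, rfl⟩ _ ⟨j, rfl⟩ hne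
    exact not_consistent_tailTheory_union fun hij => hne (hij ▸ rfl)
  · rintro ⟨D, W, -, hext⟩
    exact not_exists_ext_eq_range_tailTheory hp ⟨D, W, hext⟩

/-- the family of theories `T_i = Cn({¬p_i} ∪ {p_j : j > i})` is a countable
family of pairwise inconsistent theories that is not representable by any default theory;
in particular not by any normal one. -/
theorem pairwise_inconsistent_family_not_representable {α : Type} [Denumerable α]
    (p : ℕ → α) (hp : Function.Injective p)
    (𝒯 : Set (Set (PropForm α)))
    (h𝒯 : 𝒯 = {T | ∃ i : ℕ,
      T = Cn ({(PropForm.atom (p i)).neg} ∪ {φ | ∃ j > i, φ = PropForm.atom (p j)})}) :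
    𝒯.Countable ∧
    (∀ T ∈ 𝒯, IsTheory T) ∧
    (∀ T ∈ 𝒯, ∀ T' ∈ 𝒯, T ≠ T' → ¬ Consistent (T ∪ T')) ∧
    (¬ ∃ (D : Set (Default α)) (W : Set (PropForm α)), ext D W = 𝒯) ∧
    (¬ ∃ (D : Set (Default α)) (W : Set (PropForm α)),
        (∀ d ∈ D, d.Normal) ∧ ext D W = 𝒯) :=
  pairwise_inconsistent_family_not_representable_general p hp 𝒯 h𝒯
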